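/- Let L be a graph Laplacian with s ∈ ℝ^n, z = (I+L)⁻¹s. Let E₁, E₂ be edge Laplacians of edges (u₁,v₁) (not in L) and (u₂,v₂) (in L), δ₁ = χ₁ᵀz, δ₂ = χ₂ᵀz. Assume r₂,₁ = χ₂ᵀ(I+L+E₁)⁻¹χ₂ < 1 and L + E₁ − E₂ is PSD. If |δ₂| > (3√3/4)·|δ₁|, then sᵀ(I+L+E₁−E₂)⁻¹s > sᵀ(I+L)⁻¹s. -/

import Mathlib

/-!
Both updates are rank one, so Sherman–Morrison makes everything explicit. Adding `E₁` lowers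
`sᵀ(·)⁻¹s` by `δ₁² / (1 + r₁)`; removing `E₂` afterwards raises it by `w² / (1 - r₂₁) ≥ w²`,
where `w = δ₂ - α δ₁` with `α = χ₂ᵀ(I+L)⁻¹χ₁ / (1 + r₁)`. Cauchy–Schwarz and `r₂ ≤ 1` (the edge
is present in `L`) give `|α| (1 + r₁) ≤ √r₁`, and since `(√r + √(1 + r)) / (1 + r) ≤ 3√3/4`
the gap hypothesis makes the gain exceed the loss.
-/

open Matrix

namespace Matrix

variable {n : Type*} [Fintype n]

section Field

variable [DecidableEq n] {K : Type*} [Field K]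

theorem inv_add_vecMulVec {P : Matrix n n K} (hP : IsUnit P.det) (u v : n → K)
    (hc : 1 + v ⬝ᵥ P⁻¹ *ᵥ u ≠ 0) :
    (P + vecMulVec u v)⁻¹ =
      P⁻¹ - (1 + v ⬝ᵥ P⁻¹ *ᵥ u)⁻¹ • vecMulVec (P⁻¹ *ᵥ u) (v ᵥ* P⁻¹) := by
  apply inv_eq_right_inv
  set c := 1 + v ⬝ᵥ P⁻¹ *ᵥ u
  have hPP : P *ᵥ P⁻¹ *ᵥ u = u := by rw [mulVec_mulVec, mul_nonsing_inv _ hP, one_mulVec]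
  rw [add_mul, mul_sub, mul_sub, mul_nonsing_inv _ hP, Matrix.mul_smul, Matrix.mul_smul,
    mul_vecMulVec, hPP, vecMulVec_mul, vecMulVec_mul_vecMulVec, vecMulVec_smul, smul_smul]
  calc 1 - c⁻¹ • vecMulVec u (v ᵥ* P⁻¹) + (vecMulVec u (v ᵥ* P⁻¹)
        - (c⁻¹ * (v ⬝ᵥ P⁻¹ *ᵥ u)) • vecMulVec u (v ᵥ* P⁻¹))
      = 1 + (1 - c⁻¹ * c) • vecMulVec u (v ᵥ* P⁻¹) := by simp only [c]; module
    _ = 1 := by rw [inv_mul_cancel₀ hc, sub_self, zero_smul, add_zero]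

theorem dotProduct_inv_add_vecMulVec_mulVec {P : Matrix n n K} (hP : IsUnit P.det)
    (u v x y : n → K) (hc : 1 + v ⬝ᵥ P⁻¹ *ᵥ u ≠ 0) :
    x ⬝ᵥ (P + vecMulVec u v)⁻¹ *ᵥ y =
      x ⬝ᵥ P⁻¹ *ᵥ y - (x ⬝ᵥ P⁻¹ *ᵥ u) * (v ⬝ᵥ P⁻¹ *ᵥ y) / (1 + v ⬝ᵥ P⁻¹ *ᵥ u) := by
  rw [inv_add_vecMulVec hP u v hc, sub_mulVec, smul_mulVec, vecMulVec_mulVec, dotProduct_sub,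
    dotProduct_smul, ← dotProduct_mulVec]
  simp only [op_smul_eq_smul, dotProduct_smul, smul_eq_mul]
  ring

end Field

theorem IsHermitian.dotProduct_mulVec_comm {A : Matrix n n ℝ} (hA : A.IsHermitian)
    (x y : n → ℝ) : x ⬝ᵥ A *ᵥ y = y ⬝ᵥ A *ᵥ x := by
  rw [dotProduct_mulVec, ← mulVec_transpose, ← conjTranspose_eq_transpose_of_trivial, hA.eq,
    dotProduct_comm]

section SelfUpdate

variable [DecidableEq n] {P : Matrix n n ℝ}

theorem IsHermitian.dotProduct_inv_add_vecMulVec_self_mulVec (hP : P.IsHermitian)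
    (hPdet : IsUnit P.det) (v s : n → ℝ) (hc : 1 + v ⬝ᵥ P⁻¹ *ᵥ v ≠ 0) :
    s ⬝ᵥ (P + vecMulVec v v)⁻¹ *ᵥ s =
      s ⬝ᵥ P⁻¹ *ᵥ s - (v ⬝ᵥ P⁻¹ *ᵥ s) ^ 2 / (1 + v ⬝ᵥ P⁻¹ *ᵥ v) := by
  rw [dotProduct_inv_add_vecMulVec_mulVec hPdet v v s s hc, hP.inv.dotProduct_mulVec_comm s v, sq]

theorem IsHermitian.dotProduct_inv_sub_vecMulVec_self_mulVec (hP : P.IsHermitian)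
    (hPdet : IsUnit P.det) (v s : n → ℝ) (hc : v ⬝ᵥ P⁻¹ *ᵥ v ≠ 1) :
    s ⬝ᵥ (P - vecMulVec v v)⁻¹ *ᵥ s =
      s ⬝ᵥ P⁻¹ *ᵥ s + (v ⬝ᵥ P⁻¹ *ᵥ s) ^ 2 / (1 - v ⬝ᵥ P⁻¹ *ᵥ v) := by
  rw [sub_eq_add_neg, ← neg_vecMulVec, dotProduct_inv_add_vecMulVec_mulVec hPdet _ _ _ _
    (by rw [mulVec_neg, dotProduct_neg, ← sub_eq_add_neg, sub_ne_zero]; exact hc.symm)]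
  simp only [mulVec_neg, dotProduct_neg, hP.inv.dotProduct_mulVec_comm s v]
  ring

end SelfUpdate

theorem PosSemidef.sq_dotProduct_mulVec_le {A : Matrix n n ℝ} (hA : A.PosSemidef)
    (x y : n → ℝ) : (x ⬝ᵥ A *ᵥ y) ^ 2 ≤ (x ⬝ᵥ A *ᵥ x) * (y ⬝ᵥ A *ᵥ y) := by
  have hq : ∀ t : ℝ, 0 ≤ (x ⬝ᵥ A *ᵥ x) * (t * t) + 2 * (x ⬝ᵥ A *ᵥ y) * t + y ⬝ᵥ A *ᵥ y := by
    intro t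
    have h := hA.dotProduct_mulVec_nonneg (t • x + y)
    simp only [star_trivial, mulVec_add, mulVec_smul, dotProduct_add, add_dotProduct,
      dotProduct_smul, smul_dotProduct, smul_eq_mul, hA.isHermitian.dotProduct_mulVec_comm y x]
      at h
    linarith
  have := discrim_le_zero hq
  rw [discrim] at this
  linarith

theorem PosDef.dotProduct_inv_mulVec_le_one [DecidableEq n] {M : Matrix n n ℝ} (hM : M.PosDef)
    {v : n → ℝ} (h : (M - vecMulVec v v).PosSemidef) : v ⬝ᵥ M⁻¹ *ᵥ v ≤ 1 := by
  set y := M⁻¹ *ᵥ v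
  have hMy : M *ᵥ y = v := by
    rw [mulVec_mulVec, mul_nonsing_inv _ ((isUnit_iff_isUnit_det M).mp hM.isUnit), one_mulVec]
  have hq := h.dotProduct_mulVec_nonneg y
  simp only [star_trivial, sub_mulVec, vecMulVec_mulVec, op_smul_eq_smul, hMy, dotProduct_sub,
    dotProduct_smul, smul_eq_mul, dotProduct_comm y v] at hq
  nlinarith

end Matrix

theorem sqrt_add_sqrt_one_add_le {r : ℝ} (hr : 0 ≤ r) :
    √r + √(1 + r) ≤ 3 * √3 / 4 * (1 + r) := by
  refine le_of_pow_le_pow_left₀ two_ne_zero (by positivity) ?_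
  have ha := Real.sq_sqrt hr
  have hb := Real.sq_sqrt (by linarith : (0 : ℝ) ≤ 1 + r)
  have h3 := Real.sq_sqrt (by norm_num : (0 : ℝ) ≤ 3)
  -- `2√r√(1 + r) ≤ 2r + (1 + r)/2`; both estimates are sharp at `r = 1/3`
  nlinarith [sq_nonneg (2 * √r - √(1 + r)), sq_nonneg (3 * r - 1)]

theorem sq_div_one_add_lt_sq_sub_mul {r α δ₁ δ₂ : ℝ} (hr : 0 ≤ r) (hα : |α| * (1 + r) ≤ √r)
    (hgap : 3 * √3 / 4 * |δ₁| < |δ₂|) : δ₁ ^ 2 / (1 + r) < (δ₂ - α * δ₁) ^ 2 := by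
  have hsum := sqrt_add_sqrt_one_add_le hr
  set K := 3 * √3 / 4
  set b := √(1 + r)
  have hb : b ^ 2 = 1 + r := Real.sq_sqrt (by linarith)
  have hb0 : 0 < b := Real.sqrt_pos.mpr (by linarith)
  have hKb : 1 ≤ (K - |α|) * b := by
    have hbb : (K - |α|) * b * b = K * (1 + r) - |α| * (1 + r) := by
      rw [mul_assoc, ← sq, hb]; ring
    refine le_of_mul_le_mul_right ?_ hb0
    linarith
  have hw : |δ₂| - |α| * |δ₁| ≤ |δ₂ - α * δ₁| := by
    simpa [abs_mul] using abs_sub_abs_le_abs_sub δ₂ (α * δ₁)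
  have hlt : |δ₁| < |δ₂ - α * δ₁| * b := by
    nlinarith [abs_nonneg δ₁]
  rw [div_lt_iff₀ (by linarith), ← hb, ← sq_abs δ₁, ← sq_abs (δ₂ - α * δ₁), ← mul_pow]
  exact pow_lt_pow_left₀ hlt (abs_nonneg _) two_ne_zero

theorem pd_increase_with_swap_general {n : ℕ}
    (L : Matrix (Fin n) (Fin n) ℝ) (hL : L.PosSemidef)
    (s z χ₁ χ₂ : Fin n → ℝ)
    (E₁ E₂ : Matrix (Fin n) (Fin n) ℝ)
    (hE₁ : E₁ = vecMulVec χ₁ χ₁) (hE₂ : E₂ = vecMulVec χ₂ χ₂)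
    (hE2in : (L - E₂).PosSemidef)
    (hz : z = (1 + L)⁻¹ *ᵥ s)
    (δ₁ δ₂ r₂₁ : ℝ)
    (hδ₁ : δ₁ = χ₁ ⬝ᵥ z) (hδ₂ : δ₂ = χ₂ ⬝ᵥ z)
    (hr₂₁ : r₂₁ = χ₂ ⬝ᵥ ((1 + L + E₁)⁻¹ *ᵥ χ₂))
    (hlt : r₂₁ < 1)
    (hgap : |δ₂| > 3 * Real.sqrt 3 / 4 * |δ₁|) :
    s ⬝ᵥ ((1 + L + E₁ - E₂)⁻¹ *ᵥ s) > s ⬝ᵥ ((1 + L)⁻¹ *ᵥ s) := by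
  subst hE₁ hE₂ hz hδ₁ hδ₂ hr₂₁
  set M := 1 + L
  set A := M + vecMulVec χ₁ χ₁
  have hM : M.PosDef := PosDef.one.add_posSemidef hL
  have hA : A.PosDef := hM.add_posSemidef (by simpa using posSemidef_vecMulVec_self_star χ₁)
  set r₁ := χ₁ ⬝ᵥ M⁻¹ *ᵥ χ₁
  set g := χ₂ ⬝ᵥ M⁻¹ *ᵥ χ₁
  have hr₁ : 0 ≤ r₁ := by simpa using hM.inv.posSemidef.dotProduct_mulVec_nonneg χ₁
  have hr₂₁ : 0 ≤ χ₂ ⬝ᵥ A⁻¹ *ᵥ χ₂ := by simpa using hA.inv.posSemidef.dotProduct_mulVec_nonneg χ₂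
  have hr₂ : χ₂ ⬝ᵥ M⁻¹ *ᵥ χ₂ ≤ 1 :=
    hM.dotProduct_inv_mulVec_le_one (by simpa [M, add_sub_assoc] using PosSemidef.one.add hE2in)
  have hα : |g / (1 + r₁)| * (1 + r₁) ≤ √r₁ := by
    rw [abs_div, abs_of_pos (by linarith : 0 < 1 + r₁), div_mul_cancel₀ _ (by linarith)]
    refine Real.abs_le_sqrt ?_
    calc g ^ 2 ≤ (χ₂ ⬝ᵥ M⁻¹ *ᵥ χ₂) * r₁ := hM.inv.posSemidef.sq_dotProduct_mulVec_le χ₂ χ₁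
      _ ≤ r₁ := mul_le_of_le_one_left hr₁ hr₂
  have hMdet := (isUnit_iff_isUnit_det M).mp hM.isUnit
  have hAdet := (isUnit_iff_isUnit_det A).mp hA.isUnit
  have hw : χ₂ ⬝ᵥ A⁻¹ *ᵥ s = χ₂ ⬝ᵥ M⁻¹ *ᵥ s - g / (1 + r₁) * (χ₁ ⬝ᵥ M⁻¹ *ᵥ s) := by
    rw [dotProduct_inv_add_vecMulVec_mulVec hMdet _ _ _ _ (by linarith)]
    ring
  have hloss := hM.isHermitian.dotProduct_inv_add_vecMulVec_self_mulVec hMdet χ₁ s (by linarith)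
  have hgain := hA.isHermitian.dotProduct_inv_sub_vecMulVec_self_mulVec hAdet χ₂ s hlt.ne
  have hbeat := sq_div_one_add_lt_sq_sub_mul hr₁ hα hgap
  rw [← hw] at hbeat
  have hdown : (χ₂ ⬝ᵥ A⁻¹ *ᵥ s) ^ 2 ≤ (χ₂ ⬝ᵥ A⁻¹ *ᵥ s) ^ 2 / (1 - χ₂ ⬝ᵥ A⁻¹ *ᵥ χ₂) :=
    le_div_self (sq_nonneg _) (by linarith) (by linarith)
  rw [gt_iff_lt, hgain, hloss]
  linarith

theorem pd_increase_with_swap {n : ℕ}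
    (L : Matrix (Fin n) (Fin n) ℝ) (hL : L.PosSemidef)
    (s z χ₁ χ₂ : Fin n → ℝ)
    (u₁ v₁ u₂ v₂ : Fin n) (h1 : u₁ ≠ v₁) (h2 : u₂ ≠ v₂)
    (hχ₁u : χ₁ u₁ = 1) (hχ₁v : χ₁ v₁ = -1)
    (hχ₁ : ∀ w, w ≠ u₁ → w ≠ v₁ → χ₁ w = 0)
    (hχ₂u : χ₂ u₂ = 1) (hχ₂v : χ₂ v₂ = -1)
    (hχ₂ : ∀ w, w ≠ u₂ → w ≠ v₂ → χ₂ w = 0)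
    (E₁ E₂ : Matrix (Fin n) (Fin n) ℝ)
    (hE₁ : E₁ = vecMulVec χ₁ χ₁) (hE₂ : E₂ = vecMulVec χ₂ χ₂)
    (hE2in : (L - E₂).PosSemidef)
    (hz : z = (1 + L)⁻¹ *ᵥ s)
    (δ₁ δ₂ r₂₁ : ℝ)
    (hδ₁ : δ₁ = χ₁ ⬝ᵥ z) (hδ₂ : δ₂ = χ₂ ⬝ᵥ z)
    (hr₂₁ : r₂₁ = χ₂ ⬝ᵥ ((1 + L + E₁)⁻¹ *ᵥ χ₂))
    (hpsd : (L + E₁ - E₂).PosSemidef) (hlt : r₂₁ < 1)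
    (hgap : |δ₂| > 3 * Real.sqrt 3 / 4 * |δ₁|) :
    s ⬝ᵥ ((1 + L + E₁ - E₂)⁻¹ *ᵥ s) > s ⬝ᵥ ((1 + L)⁻¹ *ᵥ s) :=
  pd_increase_with_swap_general L hL s z χ₁ χ₂ E₁ E₂ hE₁ hE₂ hE2in hz δ₁ δ₂ r₂₁ hδ₁ hδ₂ hr₂₁ hlt
    hgap
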